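/- Let f be convex and differentiable, g_s(x) = f(x) + (μ_s/2)‖x − x₀‖² and g_{s+1}(x) = f(x) + (μ_{s+1}/2)‖x − x₀‖² with 0 < μ_{s+1} ≤ μ_s, and let x̃*_s be the minimizer of g_s and x* a minimizer of f. Then for any point x̃, ‖∇g_{s+1}(x̃)‖² ≤ 3‖∇g_s(x̃)‖² + (3(μ_s − μ_{s+1})²/μ_s²)‖∇g_s(x̃)‖² + 12(μ_s − μ_{s+1})²‖x* − x₀‖². -/

import Mathlib

/-!
Write `z` for the minimizer of `g_s` and `δ = μ_s - μ_{s+1}`. Since `z` is a stationary point of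
`g_s` and the gradient of `g_s` is `μ_s`-strongly monotone (the gradient of the convex `f` is
monotone), `μ_s ‖x̃ - z‖ ≤ ‖∇g_s(x̃)‖`. Adding `g_s(z) ≤ g_s(x*)` and `f(x*) ≤ f(z)` gives
`‖z - x₀‖ ≤ ‖x* - x₀‖`. The bound then follows from
`∇g_{s+1}(x̃) = ∇g_s(x̃) - δ (x̃ - z) - δ (z - x₀)` and `‖a - b - c‖² ≤ 3 (‖a‖² + ‖b‖² + ‖c‖²)`.
-/

open RealInnerProductSpace

theorem mul_norm_le_norm_of_mul_sq_le_inner {E : Type*} [NormedAddCommGroup E]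
    [InnerProductSpace ℝ E] {μ : ℝ} {u v : E} (h : μ * ‖u‖ ^ 2 ≤ ⟪v, u⟫) :
    μ * ‖u‖ ≤ ‖v‖ := by
  rcases (norm_nonneg u).eq_or_lt with hu | hu
  · simp [← hu]
  · refine le_of_mul_le_mul_right ?_ hu
    nlinarith [real_inner_le_norm v u]

section

variable {E : Type*} [NormedAddCommGroup E] [InnerProductSpace ℝ E] [CompleteSpace E]

theorem IsLocalMin.hasGradientAt_eq_zero {f : E → ℝ} {g a : E} (h : IsLocalMin f a)
    (hf : HasGradientAt f g a) : g = 0 := by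
  simpa using h.hasFDerivAt_eq_zero (hasGradientAt_iff_hasFDerivAt.mp hf)

theorem HasGradientAt.add_half_mul_norm_sub_sq {f : E → ℝ} {g x : E} (hf : HasGradientAt f g x)
    (μ : ℝ) (x₀ : E) :
    HasGradientAt (fun y => f y + μ / 2 * ‖y - x₀‖ ^ 2) (g + μ • (x - x₀)) x := by
  have hsq := ((hasFDerivAt_id x).sub_const x₀).norm_sq
  rw [hasGradientAt_iff_hasFDerivAt] at hf ⊢
  refine (hf.add (hsq.const_mul (μ / 2))).congr_fderiv ?_
  ext v
  simp only [add_apply, smul_apply, ContinuousLinearMap.comp_id, InnerProductSpace.toDual_apply_apply,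
    coe_innerSL_apply, id_eq, inner_add_left, real_inner_smul_left, nsmul_eq_mul, smul_eq_mul]
  ring

theorem ConvexOn.add_inner_le_of_hasGradientAt {f : E → ℝ} (hf : ConvexOn ℝ Set.univ f) {g x : E}
    (hg : HasGradientAt f g x) (y : E) : f x + ⟪g, y - x⟫ ≤ f y := by
  set φ : ℝ → ℝ := f ∘ AffineMap.lineMap x y
  have hline : HasDerivAt (fun t : ℝ => AffineMap.lineMap x y t) (y - x) 0 := by
    simpa [AffineMap.lineMap_apply_module'] using
      ((hasDerivAt_id (0 : ℝ)).smul_const (y - x)).add_const x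
  have hφ : HasDerivAt φ ⟪g, y - x⟫ 0 := by
    have hfx : HasFDerivAt f (InnerProductSpace.toDual ℝ E g : E →L[ℝ] ℝ)
        (AffineMap.lineMap x y (0 : ℝ)) := by
      simpa using hasGradientAt_iff_hasFDerivAt.mp hg
    simpa using hfx.comp_hasDerivAt (0 : ℝ) hline
  have hslope := (hf.comp_affineMap (AffineMap.lineMap x y)).le_slope_of_hasDerivAt
    (Set.mem_univ 0) (Set.mem_univ 1) one_pos hφ
  simp only [slope, Function.comp_apply, AffineMap.lineMap_apply_zero,
    AffineMap.lineMap_apply_one, vsub_eq_sub, sub_zero, inv_one, one_smul] at hslope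
  linarith

theorem ConvexOn.inner_sub_gradient_nonneg {f : E → ℝ} (hf : ConvexOn ℝ Set.univ f) {f' : E → E}
    (hgrad : ∀ x, HasGradientAt f (f' x) x) (x y : E) : 0 ≤ ⟪f' x - f' y, x - y⟫ := by
  have hx := hf.add_inner_le_of_hasGradientAt (hgrad x) y
  have hy := hf.add_inner_le_of_hasGradientAt (hgrad y) x
  rw [← neg_sub x y, inner_neg_right] at hx
  rw [inner_sub_left]
  linarith

theorem ConvexOn.mul_norm_sub_le_norm_sub_regularized_gradient {f : E → ℝ}
    (hf : ConvexOn ℝ Set.univ f) {f' : E → E} (hgrad : ∀ x, HasGradientAt f (f' x) x)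
    (μ : ℝ) (x₀ x y : E) :
    μ * ‖x - y‖ ≤ ‖(f' x + μ • (x - x₀)) - (f' y + μ • (y - x₀))‖ := by
  apply mul_norm_le_norm_of_mul_sq_le_inner
  have hsplit : (f' x + μ • (x - x₀)) - (f' y + μ • (y - x₀)) = (f' x - f' y) + μ • (x - y) := by
    module
  rw [hsplit, inner_add_left, real_inner_smul_left, real_inner_self_eq_norm_sq]
  linarith [hf.inner_sub_gradient_nonneg hgrad x y]

end

theorem sq_norm_sub_le_of_forall_add_sq_le {E : Type*} [NormedAddCommGroup E] {f : E → ℝ}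
    {μ : ℝ} (hμ : 0 < μ) {x₀ z xstar : E}
    (hz : ∀ x, f z + μ / 2 * ‖z - x₀‖ ^ 2 ≤ f x + μ / 2 * ‖x - x₀‖ ^ 2)
    (hmin : ∀ x, f xstar ≤ f x) : ‖z - x₀‖ ^ 2 ≤ ‖xstar - x₀‖ ^ 2 := by
  nlinarith [hz xstar, hmin z]

theorem sq_norm_sub_sub_le {E : Type*} [SeminormedAddCommGroup E] (a b c : E) :
    ‖a - b - c‖ ^ 2 ≤ 3 * ‖a‖ ^ 2 + 3 * ‖b‖ ^ 2 + 3 * ‖c‖ ^ 2 := by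
  have h : ‖a - b - c‖ ≤ ‖a‖ + ‖b‖ + ‖c‖ :=
    (norm_sub_le _ _).trans (add_le_add_left (norm_sub_le a b) _)
  nlinarith [norm_nonneg (a - b - c), sq_nonneg (‖a‖ - ‖b‖), sq_nonneg (‖b‖ - ‖c‖),
    sq_nonneg (‖a‖ - ‖c‖)]

theorem stmt_16 {d : ℕ} (f : EuclideanSpace ℝ (Fin d) → ℝ)
    (f' : EuclideanSpace ℝ (Fin d) → EuclideanSpace ℝ (Fin d))
    (hcvx : ConvexOn ℝ Set.univ f)
    (hgrad : ∀ x, HasGradientAt f (f' x) x)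
    (xstar : EuclideanSpace ℝ (Fin d)) (hmin : ∀ x, f xstar ≤ f x)
    (x₀ : EuclideanSpace ℝ (Fin d)) (μs μs1 : ℝ) (hμ1 : 0 < μs1) (hμ : μs1 ≤ μs)
    (xtsstar : EuclideanSpace ℝ (Fin d))
    (hgsmin : ∀ x, f xtsstar + μs / 2 * ‖xtsstar - x₀‖ ^ 2 ≤ f x + μs / 2 * ‖x - x₀‖ ^ 2)
    (xt : EuclideanSpace ℝ (Fin d)) :
    ‖f' xt + μs1 • (xt - x₀)‖ ^ 2 ≤
      3 * ‖f' xt + μs • (xt - x₀)‖ ^ 2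
      + 3 * (μs - μs1) ^ 2 / μs ^ 2 * ‖f' xt + μs • (xt - x₀)‖ ^ 2
      + 12 * (μs - μs1) ^ 2 * ‖xstar - x₀‖ ^ 2 := by
  have hμs : 0 < μs := hμ1.trans_le hμ
  set a := f' xt + μs • (xt - x₀)
  set δ := μs - μs1
  have hstationary : f' xtsstar + μs • (xtsstar - x₀) = 0 :=
    IsLocalMin.hasGradientAt_eq_zero (Filter.Eventually.of_forall hgsmin)
      ((hgrad xtsstar).add_half_mul_norm_sub_sq μs x₀)
  have hdist : (μs * ‖xt - xtsstar‖) ^ 2 ≤ ‖a‖ ^ 2 := by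
    have h := hcvx.mul_norm_sub_le_norm_sub_regularized_gradient hgrad μs x₀ xt xtsstar
    rw [hstationary, sub_zero] at h
    exact pow_le_pow_left₀ (by positivity) h 2
  have hcenter := sq_norm_sub_le_of_forall_add_sq_le hμs hgsmin hmin
  have hsplit : f' xt + μs1 • (xt - x₀) = a - δ • (xt - xtsstar) - δ • (xtsstar - x₀) := by
    module
  have hfar : δ ^ 2 * ‖xt - xtsstar‖ ^ 2 ≤ δ ^ 2 / μs ^ 2 * ‖a‖ ^ 2 := by
    calc δ ^ 2 * ‖xt - xtsstar‖ ^ 2 = δ ^ 2 / μs ^ 2 * (μs * ‖xt - xtsstar‖) ^ 2 := by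
          field_simp
      _ ≤ δ ^ 2 / μs ^ 2 * ‖a‖ ^ 2 := by gcongr
  calc ‖f' xt + μs1 • (xt - x₀)‖ ^ 2
      ≤ 3 * ‖a‖ ^ 2 + 3 * (δ ^ 2 * ‖xt - xtsstar‖ ^ 2) + 3 * (δ ^ 2 * ‖xtsstar - x₀‖ ^ 2) := by
        simpa only [hsplit, norm_smul, mul_pow, Real.norm_eq_abs, sq_abs] using
          sq_norm_sub_sub_le a (δ • (xt - xtsstar)) (δ • (xtsstar - x₀))
    _ ≤ 3 * ‖a‖ ^ 2 + 3 * (δ ^ 2 / μs ^ 2 * ‖a‖ ^ 2) + 3 * (δ ^ 2 * ‖xstar - x₀‖ ^ 2) := by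
        gcongr
    _ = 3 * ‖a‖ ^ 2 + 3 * δ ^ 2 / μs ^ 2 * ‖a‖ ^ 2 + 3 * δ ^ 2 * ‖xstar - x₀‖ ^ 2 := by ring
    _ ≤ 3 * ‖a‖ ^ 2 + 3 * δ ^ 2 / μs ^ 2 * ‖a‖ ^ 2 + 12 * δ ^ 2 * ‖xstar - x₀‖ ^ 2 := by
        gcongr
        norm_num
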